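/- The saturated closure of the class Wide of all widened inclusions is equal to the saturated closure of the class ({0} ↪ J) □ Mono of pushout-products of 0 : Δ[0] → J with all monomorphisms of simplicial sets. -/

import Mathlib

open CategoryTheory Simplicial Opposite Limits

namespace Paper

/-! ## The simplicial set `J`, nerve of the free-living isomorphism -/

/-- The simplicial set `J`, the nerve of the free-living isomorphism `𝕀`:
its `n`-simplices are the tuples `{0,1}^(n+1)` (recorded as `Bool`-valued functions,
`false` being the vertex `0` and `true` the vertex `1`), with all simplicial
operators acting by reindexing. -/
def J : SSet.{0} where
  obj m := Fin (m.unop.len + 1) → Bool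
  map f := TypeCat.ofHom (fun a => a ∘ f.unop.toOrderHom)
  map_id _ := rfl
  map_comp _ _ := rfl

/-- The two vertices `0, 1 : Δ[0] ⟶ J` of `J`; `ptJ false` is the vertex `0` and
`ptJ true` is the vertex `1`. -/
def ptJ (b : Bool) : Δ[0] ⟶ J where
  app _ := TypeCat.ofHom (fun _ => fun _ => b)
  naturality _ _ _ := rfl

/-- The boundary `∂J = {0} ∪ {1}` of `J` (two discrete points). -/
def bJ : SSet.{0} where
  obj _ := Bool
  map _ := TypeCat.ofHom (fun b => b)
  map_id _ := rfl
  map_comp _ _ := rfl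

/-- The inclusion `∂J ↪ J`. -/
def bJIncl : bJ ⟶ J where
  app _ := TypeCat.ofHom (fun b => fun _ => b)
  naturality _ _ _ := rfl

/-! ## Binary products and pushout-products -/

/-- The (pointwise) product of two simplicial sets. -/
def sprod (X Y : SSet.{0}) : SSet.{0} where
  obj m := X.obj m × Y.obj m
  map f := TypeCat.ofHom (fun p => (X.map f p.1, Y.map f p.2))
  map_id m := by
    ext p
    · exact FunctorToTypes.map_id_apply X p.1
    · exact FunctorToTypes.map_id_apply Y p.2
  map_comp f g := by
    ext p
    · exact FunctorToTypes.map_comp_apply X f g p.1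
    · exact FunctorToTypes.map_comp_apply Y f g p.2

/-- The product of two morphisms of simplicial sets. -/
def sprodMap {X X' Y Y' : SSet.{0}} (f : X ⟶ X') (g : Y ⟶ Y') : sprod X Y ⟶ sprod X' Y' where
  app m := TypeCat.ofHom (fun p => (f.app m p.1, g.app m p.2))
  naturality m m' φ := by
    ext p
    apply Prod.ext
    · exact NatTrans.naturality_apply f φ p.1
    · exact NatTrans.naturality_apply g φ p.2

/-- The pushout-product `f □ g : (A × Z) ∪ (B × W) ⟶ B × Z` of `f : A ⟶ B` and
`g : W ⟶ Z`, the domain being presented as the pushout `(A × Z) ∪_{A × W} (B × W)`. -/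
noncomputable def pp {A B W Z : SSet.{0}} (f : A ⟶ B) (g : W ⟶ Z) :
    pushout (sprodMap (𝟙 A) g) (sprodMap f (𝟙 W)) ⟶ sprod B Z :=
  pushout.desc (sprodMap f (𝟙 Z)) (sprodMap (𝟙 B) g) rfl

/-! ## Saturated classes of morphisms -/

/-- A class of morphisms is stable under retracts if, whenever `f` is a retract of `g`
in the arrow category, membership of `g` implies membership of `f`. -/
def StableUnderRetracts (T : MorphismProperty SSet.{0}) : Prop :=
  ∀ ⦃X Y X' Y' : SSet.{0}⦄ (f : X ⟶ Y) (g : X' ⟶ Y')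
    (i : Arrow.mk f ⟶ Arrow.mk g) (r : Arrow.mk g ⟶ Arrow.mk f),
    i ≫ r = 𝟙 _ → T g → T f

/-- The inclusion functor `Set.Iio i ⥤ ι`. -/
def iioFunctor {ι : Type} [Preorder ι] (i : ι) : Set.Iio i ⥤ ι :=
  Monotone.functor (f := Subtype.val) (fun _ _ h => h)

/-- The cocone on the restriction of `F : ι ⥤ SSet` to `Set.Iio i` with apex `F.obj i`. -/
def restrictionCocone {ι : Type} [Preorder ι] (F : ι ⥤ SSet.{0}) (i : ι) :
    Cocone (iioFunctor i ⋙ F) where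
  pt := F.obj i
  ι :=
    { app := fun j => F.map (homOfLE j.2.le)
      naturality := fun j k h => by
        dsimp [iioFunctor]
        rw [← F.map_comp, Category.comp_id]
        congr 1 }

/-- A class of morphisms is stable under transfinite composition if, for every
well-ordered type `ι` and every functor `F : ι ⥤ SSet` which is continuous at limit
stages and whose successor maps `F.obj i ⟶ F.obj (i+1)` all belong to the class, and
every colimit cocone `c` on `F`, the transfinite composite `F.obj ⊥ ⟶ c.pt` belongs to
the class. -/
def StableUnderTransfiniteComposition (T : MorphismProperty SSet.{0}) : Prop :=
  ∀ (ι : Type) [LinearOrder ι] [SuccOrder ι] [OrderBot ι] [WellFoundedLT ι]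
    (F : ι ⥤ SSet.{0}),
    (∀ i : ι, ¬IsMax i → T (F.map (homOfLE (Order.le_succ i)))) →
    (∀ i : ι, Order.IsSuccLimit i → Nonempty (IsColimit (restrictionCocone F i))) →
    ∀ (c : Cocone F), IsColimit c → T (c.ι.app ⊥)

/-- A class of morphisms of simplicial sets is saturated if it is closed under
isomorphisms, pushouts, transfinite compositions, and retracts. -/
structure IsSaturated (T : MorphismProperty SSet.{0}) : Prop where
  respectsIso : T.RespectsIso
  stableUnderCobaseChange : T.IsStableUnderCobaseChange
  stableUnderRetracts : StableUnderRetracts T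
  stableUnderTransfiniteComposition : StableUnderTransfiniteComposition T

/-- The saturated closure of a class of morphisms: the smallest saturated class
containing it. -/
def satClosure (S : MorphismProperty SSet.{0}) : MorphismProperty SSet.{0} :=
  fun _ _ f => ∀ T : MorphismProperty SSet.{0}, IsSaturated T → S ≤ T → T f

/-! ## Subcomplexes -/

/-- A subcomplex of a simplicial set. -/
structure Sub (X : SSet.{0}) where
  carrier : ∀ m, Set (X.obj m)
  map_mem : ∀ ⦃m m' : SimplexCategoryᵒᵖ⦄ (f : m ⟶ m') ⦃σ : X.obj m⦄,
    σ ∈ carrier m → X.map f σ ∈ carrier m'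

/-- The simplicial set underlying a subcomplex. -/
def Sub.toSSet {X : SSet.{0}} (S : Sub X) : SSet.{0} where
  obj m := S.carrier m
  map f := TypeCat.ofHom (fun σ => ⟨X.map f σ.1, S.map_mem f σ.2⟩)
  map_id m := by
    ext σ
    exact FunctorToTypes.map_id_apply X σ.1
  map_comp f g := by
    ext σ
    exact FunctorToTypes.map_comp_apply X f g σ.1

/-- The inclusion of a subcomplex. -/
def Sub.ι {X : SSet.{0}} (S : Sub X) : S.toSSet ⟶ X where
  app m := TypeCat.ofHom (fun (σ : S.carrier m) => σ.1)
  naturality _ _ _ := rfl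

/-- Containment of subcomplexes. -/
def Sub.Le {X : SSet.{0}} (S T : Sub X) : Prop := ∀ m, S.carrier m ⊆ T.carrier m

/-- The inclusion map associated to a containment of subcomplexes. -/
def Sub.homOfLe {X : SSet.{0}} {S T : Sub X} (h : S.Le T) : S.toSSet ⟶ T.toSSet where
  app m := TypeCat.ofHom (fun (σ : S.carrier m) => ⟨σ.1, h m σ.2⟩)
  naturality _ _ _ := rfl

/-- The union of two subcomplexes. -/
def Sub.union {X : SSet.{0}} (S T : Sub X) : Sub X where
  carrier m := S.carrier m ∪ T.carrier m
  map_mem _ _ f _ h := h.imp (fun hs => S.map_mem f hs) (fun ht => T.map_mem f ht)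

/-- The intersection of two subcomplexes. -/
def Sub.inter {X : SSet.{0}} (S T : Sub X) : Sub X where
  carrier m := S.carrier m ∩ T.carrier m
  map_mem _ _ f _ h := ⟨S.map_mem f h.1, T.map_mem f h.2⟩

/-- A subcomplex `S` of `X`, viewed as a subcomplex of (the simplicial set underlying)
another subcomplex `T` of `X`. -/
def Sub.restrict {X : SSet.{0}} (T S : Sub X) : Sub T.toSSet where
  carrier m := Set.ofPred fun σ : T.carrier m => σ.1 ∈ S.carrier m
  map_mem _ _ f _ h := S.map_mem f h

/-- The (dimension zero) object of `SimplexCategoryᵒᵖ` indexing vertices. -/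
abbrev V0 : SimplexCategoryᵒᵖ := Opposite.op (SimplexCategory.mk 0)

/-- The full subcomplex of `X` on a set `ν` of vertices: the simplices all of whose
vertices lie in `ν`. -/
def fullSub (X : SSet.{0}) (ν : Set (X.obj V0)) : Sub X where
  carrier m := {σ | ∀ g : SimplexCategory.mk 0 ⟶ m.unop, X.map g.op σ ∈ ν}
  map_mem := by
    intro m m' f σ hσ g
    rw [← FunctorToTypes.map_comp_apply]
    exact hσ (g ≫ f.unop)

/-! ## Widenings and widened inclusions -/

/-- The widening `W_ν(X)` of `X` at a set `ν` of vertices: the full subcomplex of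
`J × X` on the vertex set `({0} × X₀) ∪ ({1} × ν)`. -/
def wideSub (X : SSet.{0}) (ν : Set (X.obj V0)) : Sub (sprod J X) :=
  fullSub (sprod J X) (Set.ofPred fun p : J.obj V0 × X.obj V0 => p.1 0 = true → p.2 ∈ ν)

/-- The subcomplex `{0} × X` of `J × X` (the full subcomplex on the vertices
`{0} × X₀`). -/
def zeroSlice (X : SSet.{0}) : Sub (sprod J X) :=
  fullSub (sprod J X) (Set.ofPred fun p : J.obj V0 × X.obj V0 => p.1 0 = false)

/-- For `A` a subcomplex of `Y`, the subcomplex `J × A` of `J × Y`. -/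
def Sub.prodJ {Y : SSet.{0}} (A : Sub Y) : Sub (sprod J Y) where
  carrier m := Set.ofPred fun p : J.obj m × Y.obj m => p.2 ∈ A.carrier m
  map_mem _ _ f _ h := A.map_mem f h

/-- Given a subcomplex (inclusion) `A = X ⊆ Y` and a set `ν` of vertices of `Y`, the
subcomplex `({0} × Y) ∪ W_{ν ∩ X₀}(X)` of `J × Y`: the domain of the inclusion
`X ↪ Y` widened at `ν`. -/
def widenedSub (Y : SSet.{0}) (A : Sub Y) (ν : Set (Y.obj V0)) : Sub (sprod J Y) :=
  (zeroSlice Y).union ((wideSub Y (ν ∩ A.carrier V0)).inter A.prodJ)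

lemma zeroSlice_le_wideSub (Y : SSet.{0}) (ν : Set (Y.obj V0)) :
    (zeroSlice Y).Le (wideSub Y ν) := by
  intro m σ hσ g h
  exact absurd (hσ g) (by intro h'; change _ = false at h'; rw [h'] at h; exact Bool.false_ne_true h)

lemma wideSub_mono (Y : SSet.{0}) {ν ν' : Set (Y.obj V0)} (h : ν ⊆ ν') :
    (wideSub Y ν).Le (wideSub Y ν') :=
  fun _ σ hσ g ht => h (hσ g ht)

lemma widenedSub_le (Y : SSet.{0}) (A : Sub Y) (ν : Set (Y.obj V0)) :
    (widenedSub Y A ν).Le (wideSub Y ν) := by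
  refine fun m σ hσ => Or.elim hσ (fun h => ?_) (fun h => ?_)
  · exact zeroSlice_le_wideSub Y ν m h
  · exact wideSub_mono Y Set.inter_subset_left m h.1

/-- The inclusion `X ↪ Y` widened at `ν`: the inclusion
`({0} × Y) ∪ W_{ν ∩ X₀}(X) ↪ W_ν(Y)`. -/
def widenedIncl (Y : SSet.{0}) (A : Sub Y) (ν : Set (Y.obj V0)) :
    (widenedSub Y A ν).toSSet ⟶ (wideSub Y ν).toSSet :=
  Sub.homOfLe (widenedSub_le Y A ν)

/-- `Wide`: the class of all widened inclusions. -/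
def Wide : MorphismProperty SSet.{0} := fun _ _ h =>
  ∃ (Y : SSet.{0}) (A : Sub Y) (ν : Set (Y.obj V0)),
    Arrow.mk h = Arrow.mk (widenedIncl Y A ν)

/-- `Wide^(1)`: the class of inclusions widened at a single vertex. -/
def Wide1 : MorphismProperty SSet.{0} := fun _ _ h =>
  ∃ (Y : SSet.{0}) (A : Sub Y) (v : Y.obj V0),
    Arrow.mk h = Arrow.mk (widenedIncl Y A {v})

/-! ## Narrow vertices -/

/-- A vertex `v` of `Y` is narrow if every simplex of `Y` has at most one vertex equal
to `v`. -/
def Narrow (Y : SSet.{0}) (v : Y.obj V0) : Prop :=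
  ∀ ⦃m : SimplexCategoryᵒᵖ⦄ (σ : Y.obj m) (g g' : SimplexCategory.mk 0 ⟶ m.unop),
    Y.map g.op σ = v → Y.map g'.op σ = v → g = g'

/-- `Wide_nar`: the class of inclusions widened at a narrow set of vertices. -/
def WideNar : MorphismProperty SSet.{0} := fun _ _ h =>
  ∃ (Y : SSet.{0}) (A : Sub Y) (ν : Set (Y.obj V0)),
    (∀ v ∈ ν, Narrow Y v) ∧ Arrow.mk h = Arrow.mk (widenedIncl Y A ν)

/-- `Wide_nar^(1)`: the class of inclusions widened at a single narrow vertex. -/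
def WideNar1 : MorphismProperty SSet.{0} := fun _ _ h =>
  ∃ (Y : SSet.{0}) (A : Sub Y) (v : Y.obj V0),
    Narrow Y v ∧ Arrow.mk h = Arrow.mk (widenedIncl Y A {v})

/-! ## Standard simplices, boundaries, skeleta, iso-horns -/

/-- The unique map to the terminal simplicial set `Δ[0]`. -/
def toPt (X : SSet.{0}) : X ⟶ Δ[0] where
  app m := TypeCat.ofHom (fun _ => SSet.stdSimplex.const 0 0 m)
  naturality m m' f := by
    ext x
    apply (SSet.stdSimplex.objEquiv).injective
    apply SimplexCategory.Hom.ext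
    apply OrderHom.ext
    funext j
    exact Subsingleton.elim (α := Fin 1) _ _

/-- The `i`-th vertex of the standard simplex `Δ[n]`. -/
def vrt (n : ℕ) (i : Fin (n + 1)) : Δ[n].obj V0 :=
  SSet.stdSimplex.const n i V0

/-- The boundary `∂Δ[n]`, as a subcomplex of `Δ[n]`: the simplices which are not
surjective as monotone maps. -/
def bSub (n : ℕ) : Sub Δ[n] where
  carrier m := {σ | ¬Function.Surjective (SSet.stdSimplex.asOrderHom σ)}
  map_mem _ _ f σ hσ h := hσ (Function.Surjective.of_comp h)

/-- The `k`-skeleton of `Y`, as a subcomplex: the simplices which factor through some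
simplex of dimension at most `k`. -/
def skSub (Y : SSet.{0}) (k : ℕ) : Sub Y where
  carrier m := {σ | ∃ (j : ℕ) (_ : j ≤ k) (f : m.unop ⟶ SimplexCategory.mk j)
    (τ : Y.obj (Opposite.op (SimplexCategory.mk j))), Y.map f.op τ = σ}
  map_mem := by
    rintro m m' φ σ ⟨j, hj, f, τ, rfl⟩
    exact ⟨j, hj, φ.unop ≫ f, τ, by rw [← FunctorToTypes.map_comp_apply]; rfl⟩

/-- A `k`-simplex is nondegenerate if it admits no factorization through a simplex of
strictly smaller dimension. -/
def Nondegenerate (Y : SSet.{0}) {k : ℕ} (σ : Y.obj (Opposite.op (SimplexCategory.mk k))) :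
    Prop :=
  ∀ (j : ℕ) (f : SimplexCategory.mk k ⟶ SimplexCategory.mk j)
    (τ : Y.obj (Opposite.op (SimplexCategory.mk j))), Y.map f.op τ = σ → k ≤ j

/-- The iso-horn inclusion `𝕍_i[m+1] ↪ ∇̄_i[m+1]`: the boundary inclusion
`∂Δ[m] ↪ Δ[m]` widened at the single vertex `i`, i.e. the inclusion
`({0} × Δ[m]) ∪ W_i(∂Δ[m]) ↪ W_i(Δ[m])` of the iso-horn into the isoplex. -/
def isoHornIncl (m : ℕ) (i : Fin (m + 1)) :
    (widenedSub Δ[m] (bSub m) {vrt m i}).toSSet ⟶ (wideSub Δ[m] {vrt m i}).toSSet :=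
  widenedIncl Δ[m] (bSub m) {vrt m i}

/-- `IsoHorn`: the class of all iso-horn inclusions. -/
def IsoHorn : MorphismProperty SSet.{0} := fun _ _ h =>
  ∃ (m : ℕ) (i : Fin (m + 1)), Arrow.mk h = Arrow.mk (isoHornIncl m i)

/-! ## The classes `({0} ↪ J) □ Bdry` and `({0} ↪ J) □ Mono` -/

/-- The class `({0} ↪ J) □ Bdry` of pushout-products of the vertex `0 : Δ[0] ⟶ J`
with the boundary inclusions `∂Δ[n] ↪ Δ[n]`. -/
def ppJ0Bdry : MorphismProperty SSet.{0} := fun _ _ h =>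
  ∃ n : ℕ, Arrow.mk h = Arrow.mk (pp (ptJ false) (SSet.boundary n).ι)

/-- The class `({0} ↪ J) □ Mono` of pushout-products of the vertex `0 : Δ[0] ⟶ J`
with all monomorphisms of simplicial sets. -/
def ppJ0Mono : MorphismProperty SSet.{0} := fun _ _ h =>
  ∃ (W Z : SSet.{0}) (g : W ⟶ Z), Mono g ∧ Arrow.mk h = Arrow.mk (pp (ptJ false) g)


/-!
A widened inclusion `S ↪ T` (of subcomplexes of `J × Y`) is stable under the action
`(a, (b, y)) ↦ (min a b, y)` of `J`, which contracts `J` onto its vertex `0`. This action,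
together with `(∗, (b, y)) ↦ (0, y)`, retracts `({0} ↪ J) □ (S ↪ T)` onto `S ↪ T`.

Conversely, for a monomorphism `g : W ↪ Z` the domain of `({0} ↪ J) □ g` is
`({0} × Z) ∪ (J × g(W))`, so `({0} ↪ J) □ g` is the inclusion `g(W) ↪ Z` widened at every
vertex of `Z`.
-/

instance (m : SimplexCategoryᵒᵖ) : Unique (Δ[0].obj m) :=
  inferInstanceAs (Unique (ULift (_ ⟶ ⦋0⦌)))

lemma inl_pp {A B W Z : SSet.{0}} (f : A ⟶ B) (g : W ⟶ Z) :
    pushout.inl _ _ ≫ pp f g = sprodMap f (𝟙 Z) :=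
  pushout.inl_desc _ _ _

lemma inr_pp {A B W Z : SSet.{0}} (f : A ⟶ B) (g : W ⟶ Z) :
    pushout.inr _ _ ≫ pp f g = sprodMap (𝟙 B) g :=
  pushout.inr_desc _ _ _

instance Sub.mono_homOfLe {X : SSet.{0}} {S T : Sub X} (h : S.Le T) :
    Mono (Sub.homOfLe h) := by
  have (m : SimplexCategoryᵒᵖ) : Mono ((Sub.homOfLe h).app m) :=
    (mono_iff_injective _).2 fun _ _ hst => Subtype.ext (congrArg Subtype.val hst :)
  exact NatTrans.mono_of_mono_app _

lemma isSaturated_satClosure (S : MorphismProperty SSet.{0}) : IsSaturated (satClosure S) where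
  respectsIso := MorphismProperty.RespectsIso.mk _
    (fun e f hf T hT hle =>
      have := hT.respectsIso
      MorphismProperty.RespectsIso.precomp T e.hom f (hf T hT hle))
    (fun e f hf T hT hle =>
      have := hT.respectsIso
      MorphismProperty.RespectsIso.postcomp T e.hom f (hf T hT hle))
  stableUnderCobaseChange :=
    ⟨fun sq hf T hT hle => hT.stableUnderCobaseChange.of_isPushout sq (hf T hT hle)⟩
  stableUnderRetracts _ _ _ _ f g i r hir hg T hT hle :=
    hT.stableUnderRetracts f g i r hir (hg T hT hle)
  stableUnderTransfiniteComposition ι _ _ _ _ F hsucc hlim c hc T hT hle :=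
    hT.stableUnderTransfiniteComposition ι F (fun i hi => hsucc i hi T hT hle) hlim c hc

lemma le_satClosure (S : MorphismProperty SSet.{0}) : S ≤ satClosure S :=
  fun _ _ _ hf _ _ hle => hle _ hf

lemma satClosure_le {S T : MorphismProperty SSet.{0}} (hT : IsSaturated T) (h : S ≤ T) :
    satClosure S ≤ T :=
  fun _ _ _ hf => hf T hT h

lemma IsSaturated.of_retractArrow {T : MorphismProperty SSet.{0}} (hT : IsSaturated T)
    {X Y X' Y' : SSet.{0}} {f : X ⟶ Y} {g : X' ⟶ Y'} (h : RetractArrow f g) (hg : T g) : T f :=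
  hT.stableUnderRetracts f g h.i h.r h.retract hg

namespace Sub

variable {Y : SSet.{0}}

def IsMinStable (S : Sub (sprod J Y)) : Prop :=
  ∀ ⦃m : SimplexCategoryᵒᵖ⦄ (a : J.obj m) ⦃p : J.obj m × Y.obj m⦄,
    p ∈ S.carrier m → ((fun i => a i && p.1 i, p.2) : J.obj m × Y.obj m) ∈ S.carrier m

lemma IsMinStable.union {S T : Sub (sprod J Y)} (hS : S.IsMinStable) (hT : T.IsMinStable) :
    (S.union T).IsMinStable :=
  fun _ a _ hp => hp.imp (fun h => hS a h) (fun h => hT a h)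

lemma IsMinStable.inter {S T : Sub (sprod J Y)} (hS : S.IsMinStable) (hT : T.IsMinStable) :
    (S.inter T).IsMinStable :=
  fun _ a _ hp => ⟨hS a hp.1, hT a hp.2⟩

lemma isMinStable_prodJ (A : Sub Y) : A.prodJ.IsMinStable :=
  fun _ _ _ hp => hp

def minAction {S : Sub (sprod J Y)} (hS : S.IsMinStable) : sprod J S.toSSet ⟶ S.toSSet where
  app _ := TypeCat.ofHom fun p => ⟨(fun i => p.1 i && p.2.1.1 i, p.2.1.2), hS p.1 p.2.2⟩
  naturality _ _ _ := rfl

def toProdJ (S : Sub (sprod J Y)) : S.toSSet ⟶ sprod J S.toSSet where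
  app _ := TypeCat.ofHom fun σ => (σ.1.1, σ)
  naturality _ _ _ := rfl

lemma toProdJ_minAction {S : Sub (sprod J Y)} (hS : S.IsMinStable) :
    S.toProdJ ≫ minAction hS = 𝟙 _ := by
  ext m σ
  exact Subtype.ext (Prod.ext (funext fun _ => Bool.and_self _) rfl)

section ZeroProj

variable {S T : Sub (sprod J Y)}
  (hzero : ∀ ⦃m : SimplexCategoryᵒᵖ⦄ ⦃p : J.obj m × Y.obj m⦄,
    p ∈ T.carrier m → ((fun _ => false, p.2) : J.obj m × Y.obj m) ∈ S.carrier m)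

def zeroProj : sprod Δ[0] T.toSSet ⟶ S.toSSet where
  app _ := TypeCat.ofHom fun p => ⟨(fun _ => false, p.2.1.2), hzero p.2.2⟩
  naturality _ _ _ := rfl

lemma sprodMap_homOfLe_zeroProj (hST : S.Le T) (hS : S.IsMinStable) :
    sprodMap (𝟙 Δ[0]) (homOfLe hST) ≫ zeroProj hzero =
      sprodMap (ptJ false) (𝟙 _) ≫ minAction hS :=
  rfl

noncomputable def retractArrowPp (hST : S.Le T) (hS : S.IsMinStable) (hT : T.IsMinStable) :
    RetractArrow (homOfLe hST) (pp (ptJ false) (homOfLe hST)) where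
  i := Arrow.homMk' (S.toProdJ ≫ pushout.inr _ _) T.toProdJ <| by
    rw [Category.assoc, inr_pp]
    rfl
  r := Arrow.homMk'
      (pushout.desc (zeroProj hzero) (minAction hS) (sprodMap_homOfLe_zeroProj hzero hST hS))
      (minAction hT) <| by
    apply pushout.hom_ext
    · rw [← Category.assoc, ← Category.assoc, pushout.inl_desc, inl_pp]
      rfl
    · rw [← Category.assoc, ← Category.assoc, pushout.inr_desc, inr_pp]
      rfl
  retract := Arrow.hom_ext _ _
    (by
      show (S.toProdJ ≫ pushout.inr _ _) ≫ pushout.desc _ _ _ = 𝟙 _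
      rw [Category.assoc, pushout.inr_desc, toProdJ_minAction])
    (toProdJ_minAction hT)

end ZeroProj

end Sub

lemma isMinStable_zeroSlice (Y : SSet.{0}) : (zeroSlice Y).IsMinStable := by
  intro m a p hp g
  show (a _ && p.1 _) = false
  rw [show p.1 _ = false from hp g, Bool.and_false]

lemma isMinStable_wideSub (Y : SSet.{0}) (ν : Set (Y.obj V0)) : (wideSub Y ν).IsMinStable :=
  fun _ _ _ hp g hg => hp g (Bool.and_eq_true_iff.1 hg).2

lemma isMinStable_widenedSub (Y : SSet.{0}) (A : Sub Y) (ν : Set (Y.obj V0)) :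
    (widenedSub Y A ν).IsMinStable :=
  (isMinStable_zeroSlice Y).union ((isMinStable_wideSub Y _).inter (Sub.isMinStable_prodJ A))

lemma zero_mem_widenedSub (Y : SSet.{0}) (A : Sub Y) (ν : Set (Y.obj V0))
    {m : SimplexCategoryᵒᵖ} (y : Y.obj m) :
    ((fun _ => false, y) : J.obj m × Y.obj m) ∈ (widenedSub Y A ν).carrier m :=
  Or.inl fun _ => rfl

lemma wide_le_satClosure_ppJ0Mono : Wide ≤ satClosure ppJ0Mono := by
  rintro _ _ f ⟨Y, A, ν, hf⟩
  have hsat := isSaturated_satClosure ppJ0Mono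
  have := hsat.respectsIso
  rw [(satClosure ppJ0Mono).arrow_mk_iso_iff (eqToIso hf)]
  refine hsat.of_retractArrow (Sub.retractArrowPp (fun _ p _ => zero_mem_widenedSub Y A ν p.2)
    (widenedSub_le Y A ν) (isMinStable_widenedSub Y A ν) (isMinStable_wideSub Y ν)) ?_
  exact le_satClosure _ _ ⟨_, _, _, inferInstance, rfl⟩

def Sub.range {W Z : SSet.{0}} (g : W ⟶ Z) : Sub Z where
  carrier m := Set.range (g.app m)
  map_mem := by
    rintro m m' f σ ⟨w, rfl⟩
    exact ⟨W.map f w, NatTrans.naturality_apply g f w⟩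

section WidenedRange

variable {W Z : SSet.{0}} (g : W ⟶ Z)

def zeroSliceToWidenedRange :
    sprod Δ[0] Z ⟶ (widenedSub Z (Sub.range g) Set.univ).toSSet where
  app _ := TypeCat.ofHom fun p => ⟨(fun _ => false, p.2), Or.inl fun _ => rfl⟩
  naturality _ _ _ := rfl

def prodRangeToWidenedRange : sprod J W ⟶ (widenedSub Z (Sub.range g) Set.univ).toSSet where
  app m := TypeCat.ofHom fun p => ⟨(p.1, g.app m p.2),
    Or.inr ⟨fun _ _ => ⟨trivial, _, (NatTrans.naturality_apply g _ p.2)⟩, p.2, rfl⟩⟩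
  naturality m m' f := by
    refine ConcreteCategory.hom_ext _ _ fun p => ?_
    exact Subtype.ext (Prod.ext rfl (NatTrans.naturality_apply g f p.2 :))

/-- Levelwise, `({0} × Z) ∪ (J × g(W))` is the union of two subsets of `J × Z` meeting in
`{0} × g(W)`, which is a pushout of sets since `g` is injective. -/
lemma isPushout_widenedRange [Mono g] :
    IsPushout (sprodMap (𝟙 Δ[0]) g) (sprodMap (ptJ false) (𝟙 W))
      (zeroSliceToWidenedRange g) (prodRangeToWidenedRange g) := by
  refine IsPushout.of_forall_isPushout_app fun m => ?_
  have hg : Function.Injective (g.app m) := (mono_iff_injective _).1 inferInstance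
  have : Mono ((sprodMap (ptJ false) (𝟙 Z)).app m) := (mono_iff_injective _).2
    fun p q h => Prod.ext (Subsingleton.elim _ _) (congrArg Prod.snd h :)
  have : Mono ((widenedSub Z (Sub.range g) Set.univ).ι.app m) := (mono_iff_injective _).2
    fun _ _ => Subtype.ext
  refine Types.isPushout_of_isPullback_of_mono
    (k := (widenedSub Z (Sub.range g) Set.univ).ι.app m)
    (r' := (sprodMap (ptJ false) (𝟙 Z)).app m) (b' := (sprodMap (𝟙 J) g).app m) ?_ rfl rfl ?_ ?_
  · rw [Types.isPullback_iff]
    refine ⟨rfl, fun p q h => Prod.ext (Subsingleton.elim _ _) (congrArg Prod.snd h.2 :), ?_⟩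
    rintro ⟨δ, z⟩ ⟨a, w⟩ h
    obtain ⟨ha, hz⟩ := Prod.ext_iff.1 h
    exact ⟨(δ, w), Prod.ext rfl hz.symm, Prod.ext ha rfl⟩
  · refine Set.eq_univ_of_forall fun x => ?_
    rcases x.2 with h0 | ⟨-, w, hw⟩
    · refine Or.inl ⟨(default, x.1.2), Subtype.ext (Prod.ext (funext fun i => ?_) rfl)⟩
      exact (h0 (SimplexCategory.const _ _ i)).symm
    · exact Or.inr ⟨(x.1.1, w), Subtype.ext (Prod.ext rfl hw)⟩
  · exact fun p q _ _ h => Prod.ext (congrArg Prod.fst h :) (hg (congrArg Prod.snd h :))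

end WidenedRange

def wideSubUnivIso (Z : SSet.{0}) : sprod J Z ≅ (wideSub Z Set.univ).toSSet where
  hom.app _ := TypeCat.ofHom fun p => ⟨p, fun _ _ => trivial⟩
  inv := (wideSub Z Set.univ).ι

noncomputable def ppArrowIsoWidenedRange {W Z : SSet.{0}} (g : W ⟶ Z) [Mono g] :
    Arrow.mk (pp (ptJ false) g) ≅ Arrow.mk (widenedIncl Z (Sub.range g) Set.univ) :=
  Arrow.isoMk (isPushout_widenedRange g).isoPushout.symm (wideSubUnivIso Z) <| by
    apply pushout.hom_ext
    · simp only [Arrow.mk_hom, Iso.symm_hom, ← Category.assoc, IsPushout.inl_isoPushout_inv,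
        inl_pp]
      rfl
    · simp only [Arrow.mk_hom, Iso.symm_hom, ← Category.assoc, IsPushout.inr_isoPushout_inv,
        inr_pp]
      rfl

lemma ppJ0Mono_le_satClosure_wide : ppJ0Mono ≤ satClosure Wide := by
  rintro _ _ f ⟨W, Z, g, hg, hf⟩
  have := (isSaturated_satClosure Wide).respectsIso
  rw [(satClosure Wide).arrow_mk_iso_iff (eqToIso hf),
    (satClosure Wide).arrow_mk_iso_iff (ppArrowIsoWidenedRange g)]
  exact le_satClosure _ _ ⟨Z, Sub.range g, Set.univ, rfl⟩

/-- The saturated closure of the class `Wide` of widened inclusions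
equals the saturated closure of the class `({0} ↪ J) □ Mono`. -/
theorem satClosure_Wide_eq_satClosure_ppJ0Mono :
    satClosure Wide = satClosure ppJ0Mono :=
  le_antisymm (satClosure_le (isSaturated_satClosure _) wide_le_satClosure_ppJ0Mono)
    (satClosure_le (isSaturated_satClosure _) ppJ0Mono_le_satClosure_wide)

end Paper
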